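/- Let A ∈ ℝ^{r×n}, B ∈ ℝ^{r×m}, Z ∈ ℝ^{m×ℓ}, Λ ∈ ℝ^{r×ℓ}, W⁰ ∈ ℝ^{n×ℓ}, and β, δ > 0. If W⁺ minimizes W ↦ ‖W‖₁ + β(⟨Aᵀ(A W⁰ + B Z − Λ/β), W − W⁰⟩ + ‖W − W⁰‖_F²/(2δ)), then (β/δ)(W⁰ − δ Aᵀ(A W⁰ + B Z − Λ/β) − W⁺) ∈ ∂‖W⁺‖₁. Consequently, if W^k minimizes this linearized subproblem with data (W⁰, Z, Λ, β) = (W^{k−1}, Z^k, Λ^{k−1}, β_{k−1}) and B Z^k = (Λ^{k−1} − Λ^k)/β_{k−1} − A W^k, then Aᵀ Λ^k + (Aᵀ A − (1/δ) I_n) β_{k−1}(W^k − W^{k−1}) ∈ ∂‖W^k‖₁. -/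

import Mathlib

open Matrix Filter Topology

/-- The ℓ1 norm of a real matrix: sum of absolute values of all entries. -/
noncomputable def l1 {α β : Type*} [Fintype α] [Fintype β] (W : Matrix α β ℝ) : ℝ :=
  ∑ i, ∑ j, |W i j|

/-- The Frobenius (trace) inner product of two real matrices. -/
noncomputable def frobInner {α β : Type*} [Fintype α] [Fintype β] (M N : Matrix α β ℝ) : ℝ :=
  ∑ i, ∑ j, M i j * N i j

/-- The squared Frobenius norm of a real matrix. -/
noncomputable def frobSq {α β : Type*} [Fintype α] [Fintype β] (M : Matrix α β ℝ) : ℝ :=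
  ∑ i, ∑ j, (M i j) ^ 2

/-- The subdifferential of a (convex) function on real matrices at a point. -/
def subdiff {α β : Type*} [Fintype α] [Fintype β]
    (f : Matrix α β ℝ → ℝ) (x : Matrix α β ℝ) : Set (Matrix α β ℝ) :=
  {g | ∀ y, f x + frobInner g (y - x) ≤ f y}

lemma frobInner_add_right {α β : Type*} [Fintype α] [Fintype β] (M N P : Matrix α β ℝ) :
    frobInner M (N + P) = frobInner M N + frobInner M P := by
  simp [frobInner, mul_add, Finset.sum_add_distrib]

lemma frobInner_smul_right {α β : Type*} [Fintype α] [Fintype β] (c : ℝ) (M N : Matrix α β ℝ) :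
    frobInner M (c • N) = c * frobInner M N := by
  simp [frobInner, Finset.mul_sum, mul_left_comm]

lemma frobInner_smul_left {α β : Type*} [Fintype α] [Fintype β] (c : ℝ) (M N : Matrix α β ℝ) :
    frobInner (c • M) N = c * frobInner M N := by
  simp [frobInner, Finset.mul_sum, mul_assoc]

lemma frobInner_sub_left {α β : Type*} [Fintype α] [Fintype β] (M N P : Matrix α β ℝ) :
    frobInner (M - N) P = frobInner M P - frobInner N P := by
  simp [frobInner, sub_mul, Finset.sum_sub_distrib]

lemma frobInner_neg_left {α β : Type*} [Fintype α] [Fintype β] (M P : Matrix α β ℝ) :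
    frobInner (-M) P = - frobInner M P := by
  simp [frobInner, Finset.sum_neg_distrib]

lemma frobSq_add_smul {α β : Type*} [Fintype α] [Fintype β] (t : ℝ) (P D : Matrix α β ℝ) :
    frobSq (P + t • D) = frobSq P + 2*t*frobInner P D + t^2 * frobSq D := by
  have h : ∀ i j, ((P + t • D) i j)^2
      = (P i j)^2 + 2*t*(P i j * D i j) + t^2 * (D i j)^2 := by
    intro i j; simp [Matrix.add_apply, Matrix.smul_apply]; ring
  simp only [frobSq, frobInner, h, Finset.sum_add_distrib, ← Finset.mul_sum]

lemma l1_segment {α β : Type*} [Fintype α] [Fintype β] (X Y : Matrix α β ℝ) {t : ℝ}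
    (h0 : 0 ≤ t) (h1 : t ≤ 1) :
    l1 (X + t • (Y - X)) ≤ l1 X + t * (l1 Y - l1 X) := by
  have he : l1 X + t * (l1 Y - l1 X) = ∑ i, ∑ j, ((1-t)*|X i j| + t*|Y i j|) := by
    simp only [l1, Finset.sum_add_distrib, ← Finset.mul_sum]; ring
  rw [he]
  apply Finset.sum_le_sum; intro i _
  apply Finset.sum_le_sum; intro j _
  have he2 : (X + t • (Y - X)) i j = (1-t)*X i j + t*Y i j := by
    simp [Matrix.add_apply, Matrix.smul_apply, Matrix.sub_apply]; ring
  rw [he2]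
  calc |(1-t)*X i j + t*Y i j| ≤ |(1-t)*X i j| + |t*Y i j| := abs_add_le _ _
    _ = (1-t)*|X i j| + t*|Y i j| := by
        rw [abs_mul, abs_mul, abs_of_nonneg (by linarith), abs_of_nonneg h0]

/-- If `W⁺` minimizes the linearized subproblem
`W ↦ ‖W‖₁ + β(⟨Aᵀ(A W⁰ + B Z − Λ/β), W − W⁰⟩ + ‖W − W⁰‖_F²/(2δ))`, then
`(β/δ)(W⁰ − δ Aᵀ(A W⁰ + B Z − Λ/β) − W⁺) ∈ ∂‖W⁺‖₁`; consequently, if moreover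
`B Z = (Λ − Λ')/β − A W⁺` for some `Λ'`, then
`Aᵀ Λ' + (Aᵀ A − (1/δ) I) β (W⁺ − W⁰) ∈ ∂‖W⁺‖₁`. -/
theorem linearized_subproblem_optimality (r n m ℓ : ℕ)
    (A : Matrix (Fin r) (Fin n) ℝ) (B : Matrix (Fin r) (Fin m) ℝ)
    (Z : Matrix (Fin m) (Fin ℓ) ℝ) (Λ : Matrix (Fin r) (Fin ℓ) ℝ)
    (W₀ Wplus : Matrix (Fin n) (Fin ℓ) ℝ) (β δ : ℝ) (hβ : 0 < β) (hδ : 0 < δ)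
    (hmin : ∀ W : Matrix (Fin n) (Fin ℓ) ℝ,
      l1 Wplus + β * (frobInner (Aᵀ * (A * W₀ + B * Z - β⁻¹ • Λ)) (Wplus - W₀)
            + frobSq (Wplus - W₀) / (2 * δ))
        ≤ l1 W + β * (frobInner (Aᵀ * (A * W₀ + B * Z - β⁻¹ • Λ)) (W - W₀)
            + frobSq (W - W₀) / (2 * δ))) :
    ((β / δ) • (W₀ - δ • (Aᵀ * (A * W₀ + B * Z - β⁻¹ • Λ)) - Wplus)
        ∈ subdiff l1 Wplus) ∧
    (∀ Λ' : Matrix (Fin r) (Fin ℓ) ℝ,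
      B * Z = β⁻¹ • (Λ - Λ') - A * Wplus →
      Aᵀ * Λ' + (Aᵀ * A - δ⁻¹ • (1 : Matrix (Fin n) (Fin n) ℝ)) * (β • (Wplus - W₀))
        ∈ subdiff l1 Wplus) := by
  have hβ' : β ≠ 0 := ne_of_gt hβ
  have hδ' : δ ≠ 0 := ne_of_gt hδ
  set G : Matrix (Fin n) (Fin ℓ) ℝ := Aᵀ * (A * W₀ + B * Z - β⁻¹ • Λ) with hG
  set P : Matrix (Fin n) (Fin ℓ) ℝ := Wplus - W₀ with hPdef
  -- main subgradient inequality
  have main : ∀ Y : Matrix (Fin n) (Fin ℓ) ℝ,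
      l1 Wplus - l1 Y ≤ β * frobInner G (Y - Wplus) + (β/δ) * frobInner P (Y - Wplus) := by
    intro Y
    set D : Matrix (Fin n) (Fin ℓ) ℝ := Y - Wplus with hD
    set c : ℝ := β * frobInner G D + (β/δ) * frobInner P D with hc
    set K : ℝ := β * frobSq D / (2*δ) with hK
    have hseq : ∀ t : ℝ, 0 < t → t ≤ 1 → l1 Wplus - l1 Y ≤ c + t * K := by
      intro t ht0 ht1
      have h1 : Wplus + t • D - W₀ = P + t • D := by rw [hPdef]; module
      have hmt := hmin (Wplus + t • D)
      rw [h1, frobInner_add_right, frobInner_smul_right, frobSq_add_smul] at hmt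
      have hl1 : l1 (Wplus + t • D) ≤ l1 Wplus + t * (l1 Y - l1 Wplus) := by
        have : Y - Wplus = D := rfl
        simpa [this] using l1_segment Wplus Y (le_of_lt ht0) ht1
      set u : ℝ := (l1 Y - l1 Wplus) + c + t * K with hu
      have htu : 0 ≤ t * u := by
        have hring : t * u = (l1 (Wplus + t • D)
            + β * (frobInner G P + t * frobInner G D
              + (frobSq P + 2*t*frobInner P D + t^2 * frobSq D) / (2*δ)))
          - (l1 Wplus + β * (frobInner G P + frobSq P / (2*δ)))
          + (l1 Wplus + t * (l1 Y - l1 Wplus) - l1 (Wplus + t • D)) := by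
          rw [hu, hc, hK]; field_simp; ring
        rw [hring]; linarith
      have hu0 : 0 ≤ u := by
        have := le_of_mul_le_mul_left (by linarith : t * 0 ≤ t * u) ht0
        linarith
      linarith
    have htend : Tendsto (fun t : ℝ => c + t * K) (nhdsWithin 0 (Set.Ioi 0)) (nhds c) := by
      have hcont : Tendsto (fun t : ℝ => c + t * K) (nhds 0) (nhds (c + 0 * K)) :=
        tendsto_const_nhds.add (tendsto_id.mul tendsto_const_nhds)
      have h := hcont.mono_left (nhdsWithin_le_nhds (s := Set.Ioi (0:ℝ)))
      simpa using h
    have hev : ∀ᶠ t in nhdsWithin (0:ℝ) (Set.Ioi 0), l1 Wplus - l1 Y ≤ c + t * K := by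
      filter_upwards [Ioc_mem_nhdsGT_of_mem (Set.left_mem_Ico.mpr one_pos)] with t ht
      exact hseq t ht.1 ht.2
    exact ge_of_tendsto htend hev
  have part1 : (β / δ) • (W₀ - δ • G - Wplus) ∈ subdiff l1 Wplus := by
    intro Y
    have key : frobInner ((β / δ) • (W₀ - δ • G - Wplus)) (Y - Wplus)
        = -(β * frobInner G (Y - Wplus) + (β/δ) * frobInner P (Y - Wplus)) := by
      have h2 : W₀ - δ • G - Wplus = (W₀ - Wplus) - δ • G := by module
      rw [frobInner_smul_left, h2, frobInner_sub_left, frobInner_smul_left]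
      have h3 : W₀ - Wplus = -P := by rw [hPdef]; module
      rw [h3, frobInner_neg_left]
      field_simp
      ring
    have := main Y
    show l1 Wplus + frobInner ((β / δ) • (W₀ - δ • G - Wplus)) (Y - Wplus) ≤ l1 Y
    rw [key]
    linarith
  refine ⟨part1, ?_⟩
  intro Λ' hBZ
  have key : Aᵀ * Λ' + (Aᵀ * A - δ⁻¹ • (1 : Matrix (Fin n) (Fin n) ℝ)) * (β • (Wplus - W₀))
      = (β / δ) • (W₀ - δ • G - Wplus) := by
    rw [hG, hBZ]
    have expand : Aᵀ * (A * W₀ + (β⁻¹ • (Λ - Λ') - A * Wplus) - β⁻¹ • Λ)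
        = Aᵀ * A * W₀ - Aᵀ * A * Wplus - β⁻¹ • (Aᵀ * Λ') := by
      rw [Matrix.mul_sub, Matrix.mul_add, Matrix.mul_sub, Matrix.mul_smul, Matrix.mul_smul,
        Matrix.mul_sub, ← Matrix.mul_assoc, ← Matrix.mul_assoc]
      module
    have e2 : (Aᵀ * A - δ⁻¹ • (1 : Matrix (Fin n) (Fin n) ℝ)) * (β • (Wplus - W₀))
        = β • (Aᵀ * A * Wplus) - β • (Aᵀ * A * W₀) - (δ⁻¹ * β) • (Wplus - W₀) := by
      rw [Matrix.sub_mul, Matrix.smul_mul, Matrix.one_mul, Matrix.mul_smul, Matrix.mul_sub,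
        smul_sub, smul_smul]
    rw [expand, e2]
    match_scalars <;> field_simp
  rw [key]
  exact part1
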